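/- arXiv:2104.10049 — 2 statements merged into one kernel-verified Lean document; each statement's English description precedes it below -/
import Mathlib

section
/- Let s ∈ (0,1) and R > 0. Let g ∈ L²(ℝ^d) with supp g ⊂ B_{R/2} and let φ ∈ L^∞(ℝ^d) with supp φ ⊂ B_{R/2}, where B_ρ is the open ball of radius ρ centered at 0. Then there is a constant C = C(d,s,R) such that ∫_{ℝ^d∖B_R} ( ∫_{B_R} |g(x)−g(y)| |φ(x)−φ(y)| / |x−y|^{d+s} dy )² dx ≤ C ‖φ‖_{L^∞(ℝ^d)}² ‖g‖_{L²(ℝ^d)}². -/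
/-!
For `x` outside `B_R` both `g x` and `φ x` vanish, and the integrand in `y` is supported where
`g y ≠ 0`, i.e. in `B_{R/2}`, where `|x - y| ≥ |x|/2 ≳ 1 + |x|`. So the inner integral is at most
`‖φ‖_∞ (1 + |x|)^{-(d+s)} ∫_{B_R} |g|`, and `∫_{B_R} |g| ≤ |B_R|^{1/2} ‖g‖_2` by Cauchy–Schwarz.
Squaring leaves the weight `(1 + |x|)^{-2(d+s)}`, which is integrable on `ℝ^d` since `2(d+s) > d`.
-/

open MeasureTheory Metric ENNReal

lemma setLIntegral_enorm_le_eLpNorm_two_mul_sqrt_measure {α F : Type*} [MeasurableSpace α]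
    [NormedAddCommGroup F] (μ : Measure α) {g : α → F}
    (hg : AEStronglyMeasurable g μ) (S : Set α) :
    ∫⁻ y in S, ‖g y‖ₑ ∂μ ≤ eLpNorm g 2 μ * μ S ^ (1 / 2 : ℝ) := by
  have h := eLpNorm_le_eLpNorm_mul_rpow_measure_univ (μ := μ.restrict S)
    (one_le_two (α := ℝ≥0∞)) hg.restrict
  rw [Measure.restrict_apply_univ, eLpNorm_one_eq_lintegral_enorm] at h
  norm_num at h
  exact h.trans (mul_le_mul_left (eLpNorm_restrict_le _ _ _ _) _)

lemma mul_one_add_norm_le_dist {E : Type*} [SeminormedAddCommGroup E] {R : ℝ} (hR : 0 < R)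
    {x y : E} (hx : R ≤ ‖x‖) (hy : ‖y‖ < R / 2) : R / (2 * (1 + R)) * (1 + ‖x‖) ≤ dist x y := by
  have hxy : ‖x‖ / 2 ≤ dist x y := by
    rw [dist_eq_norm]
    linarith [norm_sub_norm_le x y]
  refine le_trans ?_ hxy
  rw [div_mul_eq_mul_div, div_le_div_iff₀ (by positivity) two_pos]
  nlinarith

lemma setLIntegral_ball_le_of_tsupport_subset_ball {E : Type*} [NormedAddCommGroup E]
    [MeasurableSpace E] (μ : Measure E) {R p : ℝ} (hR : 0 < R)
    (hp : 0 ≤ p) {g φ : E → ℝ} (hg : AEStronglyMeasurable g μ)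
    (hg_supp : tsupport g ⊆ ball 0 (R / 2)) (hφ_supp : tsupport φ ⊆ ball 0 (R / 2))
    {x : E} (hx : x ∉ ball 0 R) :
    ∫⁻ y in ball 0 R, ENNReal.ofReal (|g x - g y| * |φ x - φ y| / dist x y ^ p) ∂μ ≤
      ENNReal.ofReal ((R / (2 * (1 + R))) ^ (-p)) * eLpNorm φ ⊤ μ *
        (∫⁻ y in ball 0 R, ‖g y‖ₑ ∂μ) * ENNReal.ofReal ((1 + ‖x‖) ^ (-p)) := by
  rw [mem_ball_zero_iff, not_lt] at hx
  have hx_out : ∀ {f : E → ℝ}, tsupport f ⊆ ball 0 (R / 2) → f x = 0 := fun hf ↦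
    image_eq_zero_of_notMem_tsupport fun h ↦ by
      have := mem_ball_zero_iff.mp (hf h); linarith
  set a := R / (2 * (1 + R)) * (1 + ‖x‖)
  have ha : 0 < a := by positivity
  have h_pointwise : ∀ᵐ y ∂μ.restrict (ball 0 R),
      ENNReal.ofReal (|g x - g y| * |φ x - φ y| / dist x y ^ p) ≤
        ENNReal.ofReal (a ^ (-p)) * eLpNorm φ ⊤ μ * ‖g y‖ₑ := by
    filter_upwards [ae_restrict_of_ae (enorm_ae_le_eLpNormEssSup φ μ)] with y hφy
    rw [hx_out hg_supp, hx_out hφ_supp, zero_sub, zero_sub, abs_neg, abs_neg]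
    by_cases hgy : g y = 0
    · simp [hgy]
    have hy := mem_ball_zero_iff.mp (hg_supp (subset_tsupport g hgy))
    have h_dist : a ^ p ≤ dist x y ^ p :=
      Real.rpow_le_rpow ha.le (mul_one_add_norm_le_dist hR hx hy) hp
    calc ENNReal.ofReal (|g y| * |φ y| / dist x y ^ p)
        ≤ ENNReal.ofReal (a ^ (-p) * |φ y| * |g y|) := by
          refine ENNReal.ofReal_le_ofReal ?_
          rw [Real.rpow_neg ha.le, mul_assoc, inv_mul_eq_div, mul_comm |φ y|]
          exact div_le_div_of_nonneg_left (by positivity) (by positivity) h_dist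
      _ = ENNReal.ofReal (a ^ (-p)) * ‖φ y‖ₑ * ‖g y‖ₑ := by
          rw [ENNReal.ofReal_mul (by positivity), ENNReal.ofReal_mul (by positivity),
            Real.enorm_eq_ofReal_abs, Real.enorm_eq_ofReal_abs]
      _ ≤ ENNReal.ofReal (a ^ (-p)) * eLpNorm φ ⊤ μ * ‖g y‖ₑ := by
          rw [eLpNorm_exponent_top]; gcongr
  calc _ ≤ ∫⁻ y in ball 0 R, ENNReal.ofReal (a ^ (-p)) * eLpNorm φ ⊤ μ * ‖g y‖ₑ ∂μ :=
        lintegral_mono_ae h_pointwise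
    _ = _ := by
      rw [lintegral_const_mul'' _ hg.restrict.enorm, Real.mul_rpow (by positivity) (by positivity),
        ENNReal.ofReal_mul (by positivity)]
      ring

lemma lintegral_ofReal_one_add_norm_rpow_neg_sq_lt_top {E : Type*} [NormedAddCommGroup E]
    [NormedSpace ℝ E] [FiniteDimensional ℝ E] [MeasurableSpace E] [BorelSpace E] (μ : Measure E)
    [μ.IsAddHaarMeasure] {p : ℝ} (hp : (Module.finrank ℝ E : ℝ) < 2 * p) :
    ∫⁻ x, ENNReal.ofReal ((1 + ‖x‖) ^ (-p)) ^ 2 ∂μ < ⊤ := by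
  convert finite_integral_one_add_norm (μ := μ) hp using 3 with x
  rw [← ENNReal.ofReal_pow (by positivity), ← Real.rpow_mul_natCast (by positivity)]
  ring_nf

/-- Far-field/near-field cross estimate (term `III` of the commutator bound): for `g ∈ L²`
and `φ ∈ L^∞` both supported in `B_{R/2}`,
`∫_{ℝ^d∖B_R} ( ∫_{B_R} |g(x)−g(y)||φ(x)−φ(y)| / |x−y|^{d+s} dy )² dx
  ≤ C(d,s,R) ‖φ‖_∞² ‖g‖_{L²}²`. -/
theorem cross_term_estimate_outer_inner
    (d : ℕ) (s R : ℝ) (hs : s ∈ Set.Ioo (0 : ℝ) 1) (hR : 0 < R) :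
    ∃ C : ℝ≥0∞, C ≠ ⊤ ∧
      ∀ g φ : EuclideanSpace ℝ (Fin d) → ℝ,
        MemLp g 2 volume → tsupport g ⊆ ball (0 : EuclideanSpace ℝ (Fin d)) (R / 2) →
        MemLp φ ⊤ volume → tsupport φ ⊆ ball (0 : EuclideanSpace ℝ (Fin d)) (R / 2) →
        ∫⁻ x in (ball (0 : EuclideanSpace ℝ (Fin d)) R)ᶜ,
            (∫⁻ y in ball (0 : EuclideanSpace ℝ (Fin d)) R,
              ENNReal.ofReal (|g x - g y| * |φ x - φ y| / dist x y ^ ((d : ℝ) + s))) ^ 2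
          ≤ C * (eLpNorm φ ⊤ volume) ^ 2 * (eLpNorm g 2 volume) ^ 2 := by
  set p : ℝ := d + s
  have hp : 0 ≤ p := by linarith [hs.1, (d.cast_nonneg : (0 : ℝ) ≤ d)]
  have h_weight : (Module.finrank ℝ (EuclideanSpace ℝ (Fin d)) : ℝ) < 2 * p := by
    rw [finrank_euclideanSpace_fin]; linarith [hs.1]
  set κ := ENNReal.ofReal ((R / (2 * (1 + R))) ^ (-p))
  set w : EuclideanSpace ℝ (Fin d) → ℝ≥0∞ := fun x ↦ ENNReal.ofReal ((1 + ‖x‖) ^ (-p))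
  set v := volume (ball (0 : EuclideanSpace ℝ (Fin d)) R)
  refine ⟨κ ^ 2 * v * ∫⁻ x, w x ^ 2, ?_, fun g φ hg hg_supp _ hφ_supp ↦ ?_⟩
  · exact mul_ne_top (mul_ne_top (pow_ne_top ofReal_ne_top) measure_ball_lt_top.ne)
      (lintegral_ofReal_one_add_norm_rpow_neg_sq_lt_top volume h_weight).ne
  set B := κ * eLpNorm φ ⊤ volume * (eLpNorm g 2 volume * v ^ (1 / 2 : ℝ))
  calc _ ≤ ∫⁻ x in (ball 0 R)ᶜ, B ^ 2 * w x ^ 2 := by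
        refine setLIntegral_mono' measurableSet_ball.compl fun x hx ↦ ?_
        rw [← mul_pow]
        gcongr
        refine (setLIntegral_ball_le_of_tsupport_subset_ball volume hR hp hg.1 hg_supp hφ_supp
          hx).trans ?_
        gcongr
        exact mul_le_mul_right
          (setLIntegral_enorm_le_eLpNorm_two_mul_sqrt_measure volume hg.1 _) _
    _ ≤ B ^ 2 * ∫⁻ x, w x ^ 2 := by
        rw [lintegral_const_mul _ (by fun_prop)]
        gcongr
        exact Measure.restrict_le_self
    _ = _ := by
        rw [mul_pow, mul_pow, mul_pow, ← ENNReal.rpow_natCast (v ^ _), ← ENNReal.rpow_mul]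
        norm_num
        ring
end

section
/- Let s ∈ (0,1), R > 0, and t ∈ (0,1) with 0 < 1+t−s < d. Let g ∈ L²(ℝ^d) with [g]_{H^t(ℝ^d)} < ∞ and let φ : ℝ^d → ℝ be Lipschitz with ‖∇φ‖_{L^∞(ℝ^d)} < ∞. Then there is a constant C = C(d,s,t,R) such that ∫_{B_R} ( ∫_{B_R} |g(x)−g(y)| |φ(x)−φ(y)| / |x−y|^{d+s} dy )² dx ≤ C ‖∇φ‖_{L^∞(ℝ^d)}² [g]_{H^t(ℝ^d)}², where B_R ⊂ ℝ^d is the open ball of radius R centered at 0. -/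
open MeasureTheory Filter Topology Metric ENNReal

lemma finite_ball_rpow {d : ℕ} (hd : 0 < d) {α ρ : ℝ} (hα : α < d) (hρ : 0 < ρ) :
    ∫⁻ z in ball (0 : EuclideanSpace ℝ (Fin d)) ρ, ENNReal.ofReal (‖z‖ ^ (-α)) < ⊤ := by
  haveI : Nontrivial (EuclideanSpace ℝ (Fin d)) :=
    Module.nontrivial_of_finrank_pos (R := ℝ) (by simpa [finrank_euclideanSpace_fin] using hd)
  rcases le_or_gt α 0 with hα0 | hα0
  · calc ∫⁻ z in ball (0 : EuclideanSpace ℝ (Fin d)) ρ, ENNReal.ofReal (‖z‖ ^ (-α))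
        ≤ ∫⁻ _ in ball (0 : EuclideanSpace ℝ (Fin d)) ρ, ENNReal.ofReal (ρ ^ (-α)) := by
          refine setLIntegral_mono' measurableSet_ball fun z hz => ?_
          exact ENNReal.ofReal_le_ofReal
            (Real.rpow_le_rpow (norm_nonneg _) (mem_ball_zero_iff.mp hz).le
              (neg_nonneg.mpr hα0))
      _ = ENNReal.ofReal (ρ ^ (-α)) * volume (ball (0 : EuclideanSpace ℝ (Fin d)) ρ) :=
          setLIntegral_const _ _
      _ < ⊤ := ENNReal.mul_lt_top ENNReal.ofReal_lt_top measure_ball_lt_top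
  · set E := EuclideanSpace ℝ (Fin d)
    set A : ℕ → Set E := fun n => ball (0 : E) (ρ / 2 ^ n) \ ball (0 : E) (ρ / 2 ^ (n + 1))
      with hA
    have hcover : ball (0 : E) ρ ⊆ {0} ∪ ⋃ n, A n := by
      intro z hz
      rcases eq_or_ne z 0 with rfl | hz0
      · exact Or.inl rfl
      right
      have hzn : 0 < ‖z‖ := norm_pos_iff.mpr hz0
      have hzρ : ‖z‖ < ρ := mem_ball_zero_iff.mp hz
      have hex : ∃ n, ρ / 2 ^ n ≤ ‖z‖ := by
        obtain ⟨n, hn⟩ := exists_pow_lt_of_lt_one (div_pos hzn hρ) (by norm_num : (1:ℝ)/2 < 1)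
        refine ⟨n, le_of_lt ?_⟩
        have h2 : ρ / 2 ^ n = ρ * (1/2 : ℝ) ^ n := by
          rw [div_pow, one_pow]; ring
        rw [h2]
        calc ρ * (1/2 : ℝ) ^ n < ρ * (‖z‖ / ρ) := by
              exact mul_lt_mul_of_pos_left hn hρ
          _ = ‖z‖ := mul_div_cancel₀ _ hρ.ne'
      classical
      have h1 : ρ / 2 ^ (Nat.find hex) ≤ ‖z‖ := Nat.find_spec hex
      have hn0 : Nat.find hex ≠ 0 := by
        intro h
        rw [h] at h1
        simp only [pow_zero, div_one] at h1
        linarith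
      obtain ⟨m, hm⟩ := Nat.exists_eq_succ_of_ne_zero hn0
      have h2 : ¬ (ρ / 2 ^ m ≤ ‖z‖) := Nat.find_min hex (by omega)
      rw [hm] at h1
      exact Set.mem_iUnion.mpr ⟨m, mem_ball_zero_iff.mpr (lt_of_not_ge h2),
        fun hmem => absurd h1 (not_le.mpr (mem_ball_zero_iff.mp hmem))⟩
    have hterm : ∀ n, ∫⁻ z in A n, ENNReal.ofReal (‖z‖ ^ (-α)) ≤
        ENNReal.ofReal ((ρ / 2 ^ (n+1)) ^ (-α) * (ρ / 2 ^ n) ^ d) *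
          volume (ball (0 : E) 1) := by
      intro n
      have h2n : (0:ℝ) < ρ / 2 ^ (n+1) := by positivity
      calc ∫⁻ z in A n, ENNReal.ofReal (‖z‖ ^ (-α))
          ≤ ∫⁻ _ in A n, ENNReal.ofReal ((ρ / 2 ^ (n+1)) ^ (-α)) := by
            refine setLIntegral_mono' (measurableSet_ball.diff measurableSet_ball)
              fun z hz => ?_
            refine ENNReal.ofReal_le_ofReal
              (Real.rpow_le_rpow_of_nonpos h2n ?_ (neg_nonpos.mpr hα0.le))
            exact not_lt.mp fun hc => hz.2 (mem_ball_zero_iff.mpr hc)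
        _ = ENNReal.ofReal ((ρ / 2 ^ (n+1)) ^ (-α)) * volume (A n) := setLIntegral_const _ _
        _ ≤ ENNReal.ofReal ((ρ / 2 ^ (n+1)) ^ (-α)) * volume (ball (0 : E) (ρ / 2 ^ n)) := by
            gcongr
            exact Set.diff_subset
        _ = _ := by
            rw [Measure.addHaar_ball _ _ (by positivity : (0:ℝ) ≤ ρ / 2 ^ n),
              finrank_euclideanSpace_fin, ENNReal.ofReal_mul (by positivity), mul_assoc]
    have hsummable : Summable (fun n : ℕ => (ρ / 2 ^ (n+1)) ^ (-α) * (ρ / 2 ^ n) ^ d) := by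
      have hr1 : (2:ℝ) ^ α / 2 ^ d < 1 := by
        rw [div_lt_one (by positivity)]
        calc (2:ℝ) ^ α < 2 ^ (d:ℝ) := Real.rpow_lt_rpow_left_iff one_lt_two |>.mpr hα
          _ = 2 ^ d := by rw [Real.rpow_natCast]
      refine summable_of_ratio_norm_eventually_le hr1 (Eventually.of_forall fun n => ?_)
      have ht1 : (0:ℝ) < ρ / 2 ^ (n+1) := by positivity
      have ht2 : (0:ℝ) < ρ / 2 ^ n := by positivity
      have key1 : (ρ / 2 ^ (n+1+1)) ^ (-α) = (2:ℝ) ^ α * (ρ / 2 ^ (n+1)) ^ (-α) := by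
        have : ρ / 2 ^ (n+1+1) = (ρ / 2 ^ (n+1)) * (2:ℝ)⁻¹ := by
          rw [pow_succ]; ring
        rw [this, Real.mul_rpow ht1.le (by norm_num), Real.inv_rpow (by norm_num),
          ← Real.rpow_neg (by norm_num), neg_neg, mul_comm]
      have key2 : ((ρ / 2 ^ (n+1)) ^ d : ℝ) = (ρ / 2 ^ n) ^ d / 2 ^ d := by
        rw [← div_pow]
        congr 1
        rw [pow_succ]
        ring
      rw [Real.norm_eq_abs, Real.norm_eq_abs, abs_of_nonneg (by positivity),
        abs_of_nonneg (by positivity), key1, key2]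
      apply le_of_eq
      ring
    calc ∫⁻ z in ball (0 : E) ρ, ENNReal.ofReal (‖z‖ ^ (-α))
        ≤ ∫⁻ z in {0} ∪ ⋃ n, A n, ENNReal.ofReal (‖z‖ ^ (-α)) := lintegral_mono_set hcover
      _ ≤ (∫⁻ z in {(0:E)}, ENNReal.ofReal (‖z‖ ^ (-α))) +
          ∫⁻ z in ⋃ n, A n, ENNReal.ofReal (‖z‖ ^ (-α)) := lintegral_union_le _ _ _
      _ ≤ 0 + ∑' n, ∫⁻ z in A n, ENNReal.ofReal (‖z‖ ^ (-α)) := by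
          gcongr
          · rw [setLIntegral_measure_zero _ _ (measure_singleton _)]
          · exact lintegral_iUnion_le _ _
      _ ≤ 0 + ∑' n, ENNReal.ofReal ((ρ / 2 ^ (n+1)) ^ (-α) * (ρ / 2 ^ n) ^ d) *
            volume (ball (0 : E) 1) := by gcongr with n; exact hterm n
      _ = (∑' n, ENNReal.ofReal ((ρ / 2 ^ (n+1)) ^ (-α) * (ρ / 2 ^ n) ^ d)) *
            volume (ball (0 : E) 1) := by rw [zero_add, ENNReal.tsum_mul_right]
      _ < ⊤ := by
          refine ENNReal.mul_lt_top ?_ measure_ball_lt_top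
          rw [← ENNReal.ofReal_tsum_of_nonneg (fun n => by positivity) hsummable]
          exact ENNReal.ofReal_lt_top


/-- Squared Gagliardo seminorm `[f]_{H^t(ℝ^d)}²` as an `ℝ≥0∞`-valued iterated integral. -/
noncomputable def gagSq (d : ℕ) (t : ℝ) {F : Type*} [NormedAddCommGroup F]
    (f : EuclideanSpace ℝ (Fin d) → F) : ℝ≥0∞ :=
  ∫⁻ x, ∫⁻ y, ENNReal.ofReal (‖f x - f y‖ ^ 2 / dist x y ^ ((d : ℝ) + 2 * t))

/-- Near-field estimate (term `IV` of the commutator bound): for `g ∈ L²` with finite `H^t`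
seminorm and Lipschitz `φ` (with Lipschitz constant `L`, i.e. `‖∇φ‖_∞ ≤ L`),
`∫_{B_R} ( ∫_{B_R} |g(x)−g(y)||φ(x)−φ(y)| / |x−y|^{d+s} dy )² dx
  ≤ C(d,s,t,R) L² [g]_{H^t}²` whenever `0 < 1+t−s < d`. -/
theorem near_field_estimate
    (d : ℕ) (s t R : ℝ) (hs : s ∈ Set.Ioo (0 : ℝ) 1) (ht : t ∈ Set.Ioo (0 : ℝ) 1)
    (hts : 0 < 1 + t - s) (htd : 1 + t - s < d) (hR : 0 < R) :
    ∃ C : ℝ≥0∞, C ≠ ⊤ ∧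
      ∀ (g φ : EuclideanSpace ℝ (Fin d) → ℝ) (L : NNReal),
        MemLp g 2 volume → gagSq d t g ≠ ⊤ → LipschitzWith L φ →
        ∫⁻ x in ball (0 : EuclideanSpace ℝ (Fin d)) R,
            (∫⁻ y in ball (0 : EuclideanSpace ℝ (Fin d)) R,
              ENNReal.ofReal (|g x - g y| * |φ x - φ y| / dist x y ^ ((d : ℝ) + s))) ^ 2
          ≤ C * (L : ℝ≥0∞) ^ 2 * gagSq d t g := by
  obtain ⟨hs0, hs1⟩ := hs
  obtain ⟨ht0, ht1⟩ := ht
  have hd : 0 < d := by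
    have h0 : (0:ℝ) < d := hts.trans htd
    exact_mod_cast h0
  set α : ℝ := (d:ℝ) + 2*s - 2 - 2*t with hαdef
  have hαd : α < d := by
    rw [hαdef]; linarith
  have hK : (∫⁻ z in ball (0 : EuclideanSpace ℝ (Fin d)) (2*R),
      ENNReal.ofReal (‖z‖ ^ (-α))) < ⊤ :=
    finite_ball_rpow hd hαd (by linarith)
  refine ⟨_, hK.ne, ?_⟩
  intro g φ L hg _ hφ
  set p : ℝ := ((d:ℝ) + 2*t)/2 with hpdef
  set BR := ball (0 : EuclideanSpace ℝ (Fin d)) R with hBRdef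
  set u : EuclideanSpace ℝ (Fin d) → EuclideanSpace ℝ (Fin d) → ℝ≥0∞ :=
    fun x y => ENNReal.ofReal (|g x - g y| / dist x y ^ p) with hudef
  set v : EuclideanSpace ℝ (Fin d) → EuclideanSpace ℝ (Fin d) → ℝ≥0∞ :=
    fun x y => ENNReal.ofReal (dist x y ^ (-(α/2))) with hvdef
  set K := ∫⁻ z in ball (0 : EuclideanSpace ℝ (Fin d)) (2*R),
      ENNReal.ofReal (‖z‖ ^ (-α)) with hKdef
  have hgm : AEMeasurable g volume := hg.1.aemeasurable
  -- pointwise estimate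
  have hpoint : ∀ x y, ENNReal.ofReal (|g x - g y| * |φ x - φ y| / dist x y ^ ((d:ℝ)+s))
      ≤ ENNReal.ofReal (L:ℝ) * (u x y * v x y) := by
    intro x y
    rcases eq_or_ne y x with rfl | hxy
    · simp
    · have hd0 : 0 < dist x y := dist_pos.mpr (Ne.symm hxy)
      have hA : (0:ℝ) ≤ |g x - g y| / dist x y ^ p := by positivity
      rw [hudef, hvdef]
      simp only []
      rw [← ENNReal.ofReal_mul hA, ← ENNReal.ofReal_mul (NNReal.coe_nonneg L)]
      apply ENNReal.ofReal_le_ofReal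
      have hφxy : |φ x - φ y| ≤ (L:ℝ) * dist x y := by
        have h := hφ.dist_le_mul x y
        rwa [Real.dist_eq] at h
      have hsplit : dist x y ^ ((d:ℝ)+s) = dist x y ^ p * dist x y ^ (α/2) * dist x y := by
        have hexp : (d:ℝ)+s = (p + α/2) + 1 := by rw [hpdef, hαdef]; ring
        rw [hexp, Real.rpow_add_one hd0.ne', Real.rpow_add hd0]
      have hD1 : 0 < dist x y ^ p := Real.rpow_pos_of_pos hd0 _
      have hD2 : 0 < dist x y ^ (α/2) := Real.rpow_pos_of_pos hd0 _
      rw [hsplit, Real.rpow_neg hd0.le]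
      calc |g x - g y| * |φ x - φ y| / (dist x y ^ p * dist x y ^ (α/2) * dist x y)
          ≤ |g x - g y| * ((L:ℝ) * dist x y) /
              (dist x y ^ p * dist x y ^ (α/2) * dist x y) := by
            gcongr
        _ = (L:ℝ) * (|g x - g y| / dist x y ^ p * (dist x y ^ (α/2))⁻¹) := by
            field_simp
  -- squares of the two factors
  have husq : ∀ x y, (u x y) ^ (2:ℝ) =
      ENNReal.ofReal (‖g x - g y‖ ^ 2 / dist x y ^ ((d:ℝ) + 2*t)) := by
    intro x y
    rw [hudef]
    simp only []
    have key : (|g x - g y| / dist x y ^ p) ^ (2:ℝ)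
        = (g x - g y)^2 / dist x y ^ ((d:ℝ) + 2*t) := by
      have h2 : (|g x - g y| / dist x y ^ p) ^ (2:ℝ)
          = (|g x - g y| / dist x y ^ p) ^ (2:ℕ) := by
        rw [← Real.rpow_natCast]; norm_num
      rw [h2, div_pow, sq_abs, ← Real.rpow_natCast (dist x y ^ p) 2,
        ← Real.rpow_mul dist_nonneg]
      congr 1
      rw [hpdef]
      push_cast
      ring
    rw [ENNReal.ofReal_rpow_of_nonneg (by positivity) (by norm_num), key,
      Real.norm_eq_abs, sq_abs]
  have hvsq : ∀ x y, (v x y) ^ (2:ℝ) = ENNReal.ofReal (dist x y ^ (-α)) := by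
    intro x y
    rw [hvdef]
    simp only []
    rw [ENNReal.ofReal_rpow_of_nonneg (Real.rpow_nonneg dist_nonneg _) (by norm_num),
      ← Real.rpow_mul dist_nonneg]
    congr 2
    ring
  -- translation bound for the v-integral
  have hvK : ∀ x ∈ BR, (∫⁻ y in BR, ENNReal.ofReal (dist x y ^ (-α))) ≤ K := by
    intro x hx
    have hsub : BR ⊆ ball x (2*R) := by
      intro y hy
      rw [hBRdef, mem_ball] at hy
      rw [mem_ball]
      calc dist y x ≤ dist y 0 + dist 0 x := dist_triangle _ _ _
        _ < R + R := by
            rw [hBRdef, mem_ball] at hx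
            rw [dist_comm] at hx
            exact add_lt_add hy hx
        _ = 2*R := by ring
    refine le_trans (lintegral_mono_set hsub) (le_of_eq ?_)
    rw [hKdef]
    rw [← lintegral_indicator measurableSet_ball, ← lintegral_indicator measurableSet_ball]
    rw [← lintegral_sub_right_eq_self
      (fun z => (ball (0 : EuclideanSpace ℝ (Fin d)) (2*R)).indicator
        (fun z => ENNReal.ofReal (‖z‖ ^ (-α))) z) x]
    congr 1
    ext y
    have hmem : y - x ∈ ball (0 : EuclideanSpace ℝ (Fin d)) (2*R) ↔ y ∈ ball x (2*R) := by
      rw [mem_ball_zero_iff, ← dist_eq_norm', mem_ball']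
    by_cases hy : y ∈ ball x (2*R)
    · rw [Set.indicator_of_mem hy, Set.indicator_of_mem (hmem.mpr hy)]
      rw [dist_eq_norm']
    · rw [Set.indicator_of_notMem hy, Set.indicator_of_notMem (fun h => hy (hmem.mp h))]
  -- Hölder for the inner integral
  have hconj : Real.HolderConjugate 2 2 :=
    (Real.holderConjugate_iff_eq_conjExponent one_lt_two).mpr (by norm_num)
  have hinner : ∀ x,
      (∫⁻ y in BR, ENNReal.ofReal (|g x - g y| * |φ x - φ y| / dist x y ^ ((d:ℝ)+s)))
      ≤ ENNReal.ofReal (L:ℝ) *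
        ((∫⁻ y in BR, (u x y)^(2:ℝ)) ^ (1/2:ℝ) * (∫⁻ y in BR, (v x y)^(2:ℝ)) ^ (1/2:ℝ)) := by
    intro x
    have hum : AEMeasurable (u x) (volume.restrict BR) := by
      rw [hudef]
      exact ((((continuous_abs.measurable.comp_aemeasurable (aemeasurable_const.sub hgm)).div
        ((by fun_prop : Measurable fun y : EuclideanSpace ℝ (Fin d) =>
          dist x y ^ p)).aemeasurable)).ennreal_ofReal).restrict
    have hvm : AEMeasurable (v x) (volume.restrict BR) := by
      rw [hvdef]
      exact ((by fun_prop : Measurable fun y : EuclideanSpace ℝ (Fin d) =>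
        dist x y ^ (-(α/2))).ennreal_ofReal).aemeasurable.restrict
    calc (∫⁻ y in BR, ENNReal.ofReal (|g x - g y| * |φ x - φ y| / dist x y ^ ((d:ℝ)+s)))
        ≤ ∫⁻ y in BR, ENNReal.ofReal (L:ℝ) * (u x y * v x y) :=
          lintegral_mono fun y => hpoint x y
      _ = ENNReal.ofReal (L:ℝ) * ∫⁻ y in BR, (u x * v x) y := by
          rw [lintegral_const_mul' _ _ ENNReal.ofReal_ne_top]
          rfl
      _ ≤ _ := by
          gcongr
          exact ENNReal.lintegral_mul_le_Lp_mul_Lq _ hconj hum hvm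
  -- combine
  have hLne : ENNReal.ofReal (L:ℝ) ^ 2 * K ≠ ⊤ :=
    ENNReal.mul_ne_top (ENNReal.pow_ne_top ENNReal.ofReal_ne_top) hK.ne
  calc ∫⁻ x in BR, (∫⁻ y in BR,
          ENNReal.ofReal (|g x - g y| * |φ x - φ y| / dist x y ^ ((d:ℝ)+s))) ^ 2
      ≤ ∫⁻ x in BR, (ENNReal.ofReal (L:ℝ) *
          ((∫⁻ y in BR, (u x y)^(2:ℝ)) ^ (1/2:ℝ) * (∫⁻ y in BR, (v x y)^(2:ℝ)) ^ (1/2:ℝ))) ^ 2 := by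
        refine setLIntegral_mono' measurableSet_ball fun x _ => ?_
        gcongr
        exact hinner x
    _ = ∫⁻ x in BR, ENNReal.ofReal (L:ℝ) ^ 2 *
          ((∫⁻ y in BR, (u x y)^(2:ℝ)) * (∫⁻ y in BR, (v x y)^(2:ℝ))) := by
        refine lintegral_congr fun x => ?_
        rw [mul_pow, mul_pow,
          ← ENNReal.rpow_natCast ((∫⁻ y in BR, (u x y)^(2:ℝ)) ^ (1/2:ℝ)) 2,
          ← ENNReal.rpow_natCast ((∫⁻ y in BR, (v x y)^(2:ℝ)) ^ (1/2:ℝ)) 2,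
          ← ENNReal.rpow_mul, ← ENNReal.rpow_mul]
        norm_num
    _ ≤ ∫⁻ x in BR, (ENNReal.ofReal (L:ℝ) ^ 2 * K) *
          (∫⁻ y, ENNReal.ofReal (‖g x - g y‖ ^ 2 / dist x y ^ ((d:ℝ) + 2*t))) := by
        refine setLIntegral_mono' measurableSet_ball fun x hx => ?_
        have h1 : (∫⁻ y in BR, (u x y)^(2:ℝ)) ≤
            ∫⁻ y, ENNReal.ofReal (‖g x - g y‖ ^ 2 / dist x y ^ ((d:ℝ) + 2*t)) := by
          refine le_trans (le_of_eq (lintegral_congr fun y => husq x y)) ?_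
          exact setLIntegral_le_lintegral _ _
        have h2 : (∫⁻ y in BR, (v x y)^(2:ℝ)) ≤ K := by
          refine le_trans (le_of_eq (lintegral_congr fun y => hvsq x y)) (hvK x hx)
        calc ENNReal.ofReal (L:ℝ) ^ 2 *
              ((∫⁻ y in BR, (u x y)^(2:ℝ)) * (∫⁻ y in BR, (v x y)^(2:ℝ)))
            ≤ ENNReal.ofReal (L:ℝ) ^ 2 *
              ((∫⁻ y, ENNReal.ofReal (‖g x - g y‖ ^ 2 / dist x y ^ ((d:ℝ) + 2*t))) * K) := by
              gcongr
          _ = _ := by ring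
    _ = (ENNReal.ofReal (L:ℝ) ^ 2 * K) * ∫⁻ x in BR,
          (∫⁻ y, ENNReal.ofReal (‖g x - g y‖ ^ 2 / dist x y ^ ((d:ℝ) + 2*t))) :=
        lintegral_const_mul' _ _ hLne
    _ ≤ (ENNReal.ofReal (L:ℝ) ^ 2 * K) * gagSq d t g := by
        gcongr
        exact setLIntegral_le_lintegral _ _
    _ = K * (L : ℝ≥0∞) ^ 2 * gagSq d t g := by
        rw [ENNReal.ofReal_coe_nnreal]
        ring
end
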